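/- arXiv:2511.18880 — 5 statements merged into one kernel-verified Lean document; each statement's English description precedes it below -/
import Mathlib

section
/- Let G be a finite simple graph with vertex set {u_1,...,u_n}, and suppose there is no vertex u and set R ⊆ N(u) with 2|R| > deg(u) > 1 such that all vertices in R have the same neighborhood. Then the coloring c(u_i) = 2^(i-1) is a majority additive 2^(n-1)-coloring of G; that is, for every vertex u of degree at least 2 and every integer s, at most half of the neighbors v of u satisfy s_c(v) = s, where s_c(v) = Σ_{w ∈ N(v)} c(w). -/
open SimpleGraph Finset

variable {V : Type*} [Fintype V] [DecidableEq V]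

/-- The induced sum function `s_c(v) = ∑_{w ∈ N_G(v)} c(w)`. -/
def sc (G : SimpleGraph V) [DecidableRel G.Adj] (c : V → ℕ) (v : V) : ℕ :=
  ∑ w ∈ G.neighborFinset v, c w

/-- `c` is a majority additive `k`-coloring of `G`. -/
def IsMAC (G : SimpleGraph V) [DecidableRel G.Adj] (k : ℕ) (c : V → ℕ) : Prop :=
  (∀ v, c v ∈ Finset.Icc 1 k) ∧
  ∀ u : V, 2 ≤ G.degree u → ∀ s : ℕ,
    2 * ((G.neighborFinset u).filter (fun v => sc G c v = s)).card ≤ G.degree u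

/-- `G` is good: no vertex `u` with `R ⊆ N(u)`, `2|R| > deg u > 1`, all of `R` with the
same neighborhood. -/
def Good (G : SimpleGraph V) [DecidableRel G.Adj] : Prop :=
  ¬ ∃ (u : V) (R : Finset V), R ⊆ G.neighborFinset u ∧ G.degree u < 2 * R.card ∧
      1 < G.degree u ∧ ∀ v ∈ R, ∀ w ∈ R, G.neighborSet v = G.neighborSet w

theorem stmt0 (n : ℕ) (G : SimpleGraph (Fin n)) [DecidableRel G.Adj] (hgood : Good G) :
    IsMAC G (2 ^ (n - 1)) (fun i => 2 ^ (i : ℕ)) := by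
  constructor
  · intro v
    simp only [Finset.mem_Icc]
    exact ⟨Nat.one_le_two_pow, Nat.pow_le_pow_right (by norm_num)
      (Nat.le_sub_one_of_lt v.isLt)⟩
  · intro u hdeg s
    by_contra h
    push_neg at h
    apply hgood
    refine ⟨u, (G.neighborFinset u).filter (fun v => sc G (fun i => 2 ^ (i : ℕ)) v = s),
      Finset.filter_subset _ _, h, hdeg, ?_⟩
    intro v hv w hw
    simp only [Finset.mem_filter] at hv hw
    have hsum : ∑ k ∈ (G.neighborFinset v).image Fin.val, 2 ^ k
        = ∑ k ∈ (G.neighborFinset w).image Fin.val, 2 ^ k := by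
      rw [Finset.sum_image (fun a _ b _ h => Fin.val_injective h),
        Finset.sum_image (fun a _ b _ h => Fin.val_injective h)]
      exact hv.2.trans hw.2.symm
    have := Finset.geomSum_injective (le_refl 2) hsum
    have himg : G.neighborFinset v = G.neighborFinset w :=
      Finset.image_injective Fin.val_injective this
    ext x
    simp only [SimpleGraph.mem_neighborSet]
    rw [← SimpleGraph.mem_neighborFinset, ← SimpleGraph.mem_neighborFinset, himg]
end

section
/- A finite simple graph G admits a majority additive k-coloring for some positive integer k if and only if there is no vertex u with a subset R of its neighborhood satisfying 2|R| > deg_G(u) > 1 and N_G(v) = N_G(w) for all v, w ∈ R. -/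
open SimpleGraph Finset

variable {V : Type*} [Fintype V] [DecidableEq V]

theorem stmt2 (G : SimpleGraph V) [DecidableRel G.Adj] :
    (∃ k : ℕ, 1 ≤ k ∧ ∃ c : V → ℕ, IsMAC G k c) ↔ Good G := by
  constructor
  · rintro ⟨k, hk, c, hmem, hmac⟩ ⟨u, R, hR, hcard, hdeg, hsame⟩
    obtain ⟨v₀, hv₀⟩ : R.Nonempty := by
      rw [Finset.nonempty_iff_ne_empty]
      rintro rfl
      simp at hcard
    have hsub : R ⊆ (G.neighborFinset u).filter (fun v => sc G c v = sc G c v₀) := by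
      intro v hv
      refine Finset.mem_filter.2 ⟨hR hv, ?_⟩
      have hN : G.neighborFinset v = G.neighborFinset v₀ := by
        have := hsame v hv v₀ hv₀
        simp [SimpleGraph.neighborFinset, this]
      simp [sc, hN]
    have := hmac u (by omega) (sc G c v₀)
    have hle := Finset.card_le_card hsub
    omega
  · intro hgood
    set n := Fintype.card V with hn
    obtain ⟨e⟩ : Nonempty (V ≃ Fin n) := ⟨Fintype.equivFin V⟩
    refine ⟨2 ^ n, Nat.one_le_two_pow, fun v => 2 ^ (e v : ℕ), ?_, ?_⟩
    · intro v
      refine Finset.mem_Icc.2 ⟨Nat.one_le_two_pow, Nat.pow_le_pow_right (by norm_num) ?_⟩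
      exact le_of_lt (e v).2
    · intro u hdeg s
      set c : V → ℕ := fun v => 2 ^ (e v : ℕ) with hc
      set F := (G.neighborFinset u).filter (fun v => sc G c v = s) with hF
      rcases F.eq_empty_or_nonempty with hFe | ⟨v₀, hv₀⟩
      · simp [hFe]
      have hsceq : ∀ v w : V, sc G c v = sc G c w → G.neighborSet v = G.neighborSet w := by
        intro v w h
        have key : ∀ x : V, sc G c x = ∑ i ∈ (G.neighborFinset x).image (fun y => (e y : ℕ)),
            2 ^ i := by
          intro x
          rw [Finset.sum_image]
          · rfl
          · intro a _ b _ hab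
            exact e.injective (Fin.val_injective hab)
        rw [key v, key w] at h
        have himg : (G.neighborFinset v).image (fun y => (e y : ℕ)) =
            (G.neighborFinset w).image (fun y => (e y : ℕ)) := by
          have := congrArg (fun m => m.bitIndices.toFinset) h
          simpa using this
        have hNf : G.neighborFinset v = G.neighborFinset w := by
          ext x
          have hx := Finset.ext_iff.1 himg (e x : ℕ)
          simp only [Finset.mem_image] at hx
          constructor
          · intro h'
            obtain ⟨y, hy, hyx⟩ := hx.1 ⟨x, h', rfl⟩
            rwa [e.injective (Fin.val_injective hyx)] at hy
          · intro h'
            obtain ⟨y, hy, hyx⟩ := hx.2 ⟨x, h', rfl⟩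
            rwa [e.injective (Fin.val_injective hyx)] at hy
        ext x
        have := Finset.ext_iff.1 hNf x
        simpa [SimpleGraph.mem_neighborFinset] using this
      by_contra hlt
      push_neg at hlt
      exact hgood ⟨u, F, Finset.filter_subset _ _, hlt, by omega, fun v hv w hw => by
        have hv' := (Finset.mem_filter.1 hv).2
        have hw' := (Finset.mem_filter.1 hw).2
        exact hsceq v w (hv'.trans hw'.symm)⟩
end

section
/- If G is a good finite simple graph of maximum degree Δ, then the majority additive chromatic number of G is at most 2Δ(Δ-1)+1, i.e., G admits a majority additive (2Δ(Δ-1)+1)-coloring. -/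
set_option maxHeartbeats 1000000

open SimpleGraph Finset

variable {V : Type*} [Fintype V] [DecidableEq V]

namespace MacAux
variable (G : SimpleGraph V) [DecidableRel G.Adj]

def nd (x y : V) : Finset V :=
  (G.neighborFinset x \ G.neighborFinset y) ∪ (G.neighborFinset y \ G.neighborFinset x)
def fixs (c : V → ℕ) (P : Finset V) (v : V) : ℕ := ∑ x ∈ G.neighborFinset v ∩ P, c x
def cls (c : V → ℕ) (P : Finset V) (A : Finset V) (v : V) : Finset V :=
  A.filter (fun x => nd G x v ⊆ P ∧ fixs G c P x = fixs G c P v)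
def Inv (c : V → ℕ) (P : Finset V) : Prop :=
  ∀ u : V, 2 ≤ G.degree u → ∀ S : Finset V, S ⊆ G.neighborFinset u →
    (∀ v ∈ S, ∀ v' ∈ S, nd G v v' ⊆ P ∧ fixs G c P v = fixs G c P v') →
    2 * S.card ≤ G.degree u

lemma nd_comm (x y : V) : nd G x y = nd G y x := union_comm _ _
lemma nd_self (x : V) : nd G x x = ∅ := by simp [nd]
lemma nd_triangle (x y z : V) : nd G x z ⊆ nd G x y ∪ nd G y z := by
  intro a; simp only [nd, mem_union, mem_sdiff]; tauto
lemma mem_cls_self {c : V → ℕ} {P A : Finset V} {v : V} (hv : v ∈ A) :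
    v ∈ cls G c P A v := by simp [cls, hv, nd_self]
lemma cls_eq_of_mem {c : V → ℕ} {P A : Finset V} {x v : V} (hx : x ∈ cls G c P A v) :
    cls G c P A x = cls G c P A v := by
  simp only [cls, mem_filter] at hx
  obtain ⟨hxA, hnd, hfix⟩ := hx
  ext y
  simp only [cls, mem_filter]
  constructor
  · rintro ⟨hyA, hnd2, hfix2⟩
    exact ⟨hyA, (nd_triangle G y x v).trans (union_subset hnd2 hnd), by omega⟩
  · rintro ⟨hyA, hnd2, hfix2⟩
    refine ⟨hyA, ?_, by omega⟩
    have h3 : nd G y x ⊆ nd G y v ∪ nd G v x := nd_triangle G y v x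
    rw [nd_comm G v x] at h3
    exact h3.trans (union_subset hnd2 hnd)
lemma fix_eq_of_mem_cls {c : V → ℕ} {P A : Finset V} {x v : V} (hx : x ∈ cls G c P A v) :
    fixs G c P x = fixs G c P v := (mem_filter.1 hx).2.2

section Bad
variable (c : V → ℕ) (P : Finset V) (w : V)

/-- set of bad pairs at vertex `u` -/
def badPairs (u : V) : Finset (V × V) :=
  (((G.neighborFinset u ∩ G.neighborFinset w)) ×ˢ (G.neighborFinset u \ G.neighborFinset w)).filter
    (fun p => 2 ≤ G.degree u ∧ nd G p.1 p.2 ⊆ insert w P ∧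
      G.degree u < 2 * ((cls G c P (G.neighborFinset u ∩ G.neighborFinset w) p.1).card +
        (cls G c P (G.neighborFinset u \ G.neighborFinset w) p.2).card))

lemma mem_badPairs_intro {u v v' : V}
    (h1 : v ∈ G.neighborFinset u ∩ G.neighborFinset w)
    (h2 : v' ∈ G.neighborFinset u \ G.neighborFinset w)
    (h3 : 2 ≤ G.degree u) (h4 : nd G v v' ⊆ insert w P)
    (h5 : G.degree u < 2 * ((cls G c P (G.neighborFinset u ∩ G.neighborFinset w) v).card +
      (cls G c P (G.neighborFinset u \ G.neighborFinset w) v').card)) :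
    (v, v') ∈ badPairs G c P w u := by
  simp only [badPairs, mem_filter, mem_product]
  exact ⟨⟨h1, h2⟩, h3, h4, h5⟩

def badU (u : V) : Finset ℕ :=
  (badPairs G c P w u).image (fun p => fixs G c P p.2 - fixs G c P p.1)

lemma mem_badU_intro {u : V} {p : V × V} (hp : p ∈ badPairs G c P w u) :
    fixs G c P p.2 - fixs G c P p.1 ∈ badU G c P w u := by
  simp only [badU]
  exact mem_image_of_mem _ hp

def bad : Finset ℕ := univ.biUnion (badU G c P w)

lemma mem_bad_intro {u : V} {z : ℕ} (h : z ∈ badU G c P w u) : z ∈ bad G c P w := by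
  simp only [bad]
  exact mem_biUnion.2 ⟨u, mem_univ u, h⟩

lemma badU_card_le (hInv : Inv G c P) (u : V) :
    (badU G c P w u).card ≤ 2 * (G.neighborFinset u ∩ G.neighborFinset w).card := by
  classical
  set A := G.neighborFinset u ∩ G.neighborFinset w with hA
  set B := G.neighborFinset u \ G.neighborFinset w with hB
  set d := G.degree u with hd
  -- the set of classes
  set Cset : Finset (Finset V) := A.image (fun v => cls G c P A v) with hCset
  -- decompose badPairs by the class of the first coordinate
  have hsub : badU G c P w u ⊆ Cset.biUnion (fun K =>
      ((badPairs G c P w u).filter (fun p => cls G c P A p.1 = K)).image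
        (fun p => fixs G c P p.2 - fixs G c P p.1)) := by
    intro z hz
    obtain ⟨p, hp, rfl⟩ := mem_image.1 hz
    have hp1A : p.1 ∈ A := (mem_product.1 (mem_filter.1 hp).1).1
    refine mem_biUnion.2 ⟨cls G c P A p.1, mem_image_of_mem _ hp1A, ?_⟩
    exact mem_image_of_mem _ (mem_filter.2 ⟨hp, rfl⟩)
  have hcard1 : (badU G c P w u).card ≤
      ∑ K ∈ Cset, (((badPairs G c P w u).filter (fun p => cls G c P A p.1 = K)).image
        (fun p => fixs G c P p.2 - fixs G c P p.1)).card :=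
    le_trans (card_le_card hsub) (card_biUnion_le)
  -- per-class bound
  have hclassbound : ∀ K ∈ Cset,
      (((badPairs G c P w u).filter (fun p => cls G c P A p.1 = K)).image
        (fun p => fixs G c P p.2 - fixs G c P p.1)).card ≤ 2 * K.card := by
    intro K hK
    obtain ⟨v₀, hv₀A, rfl⟩ := mem_image.1 hK
    set K := cls G c P A v₀
    set r := fixs G c P v₀ with hr
    -- all first coordinates in this part have fix value r
    have hfixfst : ∀ p ∈ (badPairs G c P w u).filter (fun p => cls G c P A p.1 = K),
        fixs G c P p.1 = r := by
      intro p hp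
      have h1 : p.1 ∈ A := (mem_product.1 (mem_filter.1 (mem_filter.1 hp).1).1).1
      have h2 : cls G c P A p.1 = K := (mem_filter.1 hp).2
      have : p.1 ∈ K := h2 ▸ mem_cls_self G h1
      exact fix_eq_of_mem_cls G this
    set base := (badPairs G c P w u).filter (fun p => cls G c P A p.1 = K) with hbase
    by_cases hbe : base = ∅
    · simp [hbe]
    obtain ⟨p₀, hp₀⟩ := nonempty_of_ne_empty hbe
    have hp₀bp := (mem_filter.1 hp₀).1
    have hdeg2 : 2 ≤ d := (mem_filter.1 hp₀bp).2.1
    -- target value set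
    set TK := base.image (fun p => fixs G c P p.2) with hTK
    -- the image factors through TK
    have himg : (base.image (fun p => fixs G c P p.2 - fixs G c P p.1)).card ≤ TK.card := by
      have : base.image (fun p => fixs G c P p.2 - fixs G c P p.1) ⊆
          TK.image (fun t => t - r) := by
        intro z hz
        obtain ⟨p, hp, rfl⟩ := mem_image.1 hz
        rw [hfixfst p hp]
        exact mem_image_of_mem _ (mem_image_of_mem _ hp)
      exact le_trans (card_le_card this) (card_image_le)
    -- now bound TK.card
    set h2 := d / 2 with hh2
    set c₀ := K.card with hc₀
    have hc₀1 : 1 ≤ c₀ := card_pos.2 ⟨v₀, mem_cls_self G hv₀A⟩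
    -- K satisfies the invariant's hypotheses
    have hKinv : 2 * c₀ ≤ d := by
      apply hInv u hdeg2 K
      · intro x hx
        exact (mem_inter.1 ((mem_filter.1 hx).1)).1
      · intro x hx y hy
        have hx' := mem_filter.1 hx
        have hy' := mem_filter.1 hy
        constructor
        · have h3 : nd G x y ⊆ nd G x v₀ ∪ nd G v₀ y := nd_triangle G x v₀ y
          rw [nd_comm G v₀ y] at h3
          exact h3.trans (union_subset hx'.2.1 hy'.2.1)
        · omega
    have hc₀h : c₀ ≤ h2 := by omega
    have hm1 : 1 ≤ h2 + 1 - c₀ := by omega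
    -- each t ∈ TK has a large fiber in B
    have hfiber : ∀ t ∈ TK, h2 + 1 - c₀ ≤ (B.filter (fun x => fixs G c P x = t)).card := by
      intro t ht
      obtain ⟨p, hp, rfl⟩ := mem_image.1 ht
      have hpbp := (mem_filter.1 hp).1
      have hpb := mem_filter.1 hpbp
      have hp2B : p.2 ∈ B := (mem_product.1 hpb.1).2
      have hbig := hpb.2.2.2
      have hclsK : cls G c P A p.1 = K := (mem_filter.1 hp).2
      rw [hclsK] at hbig
      have hsub2 : cls G c P (G.neighborFinset u \ G.neighborFinset w) p.2 ⊆
          B.filter (fun x => fixs G c P x = fixs G c P p.2) := by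
        intro x hx
        have hx' := mem_filter.1 hx
        exact mem_filter.2 ⟨hx'.1, hx'.2.2⟩
      have := card_le_card hsub2
      omega
    -- fibers for distinct t are disjoint subsets of B
    have hTB : (h2 + 1 - c₀) * TK.card ≤ B.card := by
      have hdisj : ∀ t₁ ∈ TK, ∀ t₂ ∈ TK, t₁ ≠ t₂ →
          Disjoint (B.filter (fun x => fixs G c P x = t₁))
            (B.filter (fun x => fixs G c P x = t₂)) := by
        intro t₁ _ t₂ _ hne
        refine disjoint_left.2 fun x hx₁ hx₂ => hne ?_
        rw [← (mem_filter.1 hx₁).2, ← (mem_filter.1 hx₂).2]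
      calc (h2 + 1 - c₀) * TK.card = ∑ _t ∈ TK, (h2 + 1 - c₀) := by
            rw [sum_const, smul_eq_mul, mul_comm]
        _ ≤ ∑ t ∈ TK, (B.filter (fun x => fixs G c P x = t)).card :=
            sum_le_sum hfiber
        _ = (TK.biUnion (fun t => B.filter (fun x => fixs G c P x = t))).card :=
            (card_biUnion hdisj).symm
        _ ≤ B.card := card_le_card (biUnion_subset.2 fun t _ => filter_subset _ _)
    -- |B| ≤ d - c₀
    have hBcard : B.card + A.card = d := by
      have h7 : A.card + B.card = (G.neighborFinset u).card :=
        card_inter_add_card_sdiff (G.neighborFinset u) (G.neighborFinset w)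
      have h8 : (G.neighborFinset u).card = d := rfl
      omega
    have hKA : c₀ ≤ A.card := card_le_card (filter_subset _ _)
    -- arithmetic: TK.card ≤ 2 * c₀
    have harith : TK.card ≤ 2 * c₀ := by
      by_contra hcon
      push_neg at hcon
      set m := h2 + 1 - c₀ with hm'
      have hm : m + c₀ = h2 + 1 := by omega
      have h1 : m * (2 * c₀ + 1) ≤ m * TK.card := Nat.mul_le_mul_left _ (by omega)
      have h5 : m * (2 * c₀ + 1) ≤ B.card := le_trans h1 hTB
      have h6 : m * (2 * c₀ + 1) + c₀ ≤ d :=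
        le_trans (Nat.add_le_add_right h5 c₀) (by omega)
      have key : 2 * h2 + 2 ≤ m * (2 * c₀ + 1) + c₀ := by
        zify
        nlinarith [mul_nonneg (by omega : (0:ℤ) ≤ (c₀:ℤ) - 1) (by omega : (0:ℤ) ≤ (h2:ℤ) - c₀)]
      have hd2 : d ≤ 2 * h2 + 1 := by omega
      omega
    calc (base.image (fun p => fixs G c P p.2 - fixs G c P p.1)).card ≤ TK.card := himg
      _ ≤ 2 * K.card := harith
  -- classes are pairwise disjoint, so total class size is ≤ |A|
  have hdisjC : ∀ K₁ ∈ Cset, ∀ K₂ ∈ Cset, K₁ ≠ K₂ → Disjoint K₁ K₂ := by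
    intro K₁ hK₁ K₂ hK₂ hne
    obtain ⟨v₁, _, rfl⟩ := mem_image.1 hK₁
    obtain ⟨v₂, _, rfl⟩ := mem_image.1 hK₂
    refine disjoint_left.2 fun x hx₁ hx₂ => hne ?_
    rw [← cls_eq_of_mem G hx₁, ← cls_eq_of_mem G hx₂]
  have hsumC : ∑ K ∈ Cset, K.card ≤ A.card := by
    rw [← card_biUnion hdisjC]
    apply card_le_card
    intro x hx
    obtain ⟨K, hK, hxK⟩ := mem_biUnion.1 hx
    obtain ⟨v, _, rfl⟩ := mem_image.1 hK
    exact (mem_filter.1 hxK).1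
  calc (badU G c P w u).card
      ≤ ∑ K ∈ Cset, (((badPairs G c P w u).filter (fun p => cls G c P A p.1 = K)).image
        (fun p => fixs G c P p.2 - fixs G c P p.1)).card := hcard1
    _ ≤ ∑ K ∈ Cset, 2 * K.card := sum_le_sum hclassbound
    _ = 2 * ∑ K ∈ Cset, K.card := by rw [mul_sum]
    _ ≤ 2 * A.card := by omega


lemma badU_w_empty : badU G c P w w = ∅ := by
  have : badPairs G c P w w = ∅ := by
    rw [← Finset.subset_empty]
    intro p hp
    have h1 := (mem_product.1 (mem_filter.1 hp).1).2
    rw [sdiff_self] at h1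
    exact absurd h1 (notMem_empty _)
  rw [badU, this, image_empty]

lemma sum_inter_card_le :
    ∑ u ∈ univ.erase w, (G.neighborFinset u ∩ G.neighborFinset w).card ≤
      G.maxDegree * (G.maxDegree - 1) := by
  classical
  have h1 : ∀ u : V, (G.neighborFinset u ∩ G.neighborFinset w).card =
      ∑ v ∈ G.neighborFinset w, if v ∈ G.neighborFinset u then 1 else 0 := by
    intro u
    rw [← card_filter]
    congr 1
    ext x
    simp only [mem_inter, mem_filter]
    tauto
  calc ∑ u ∈ univ.erase w, (G.neighborFinset u ∩ G.neighborFinset w).card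
      = ∑ u ∈ univ.erase w, ∑ v ∈ G.neighborFinset w,
          if v ∈ G.neighborFinset u then 1 else 0 := by
        exact sum_congr rfl fun u _ => h1 u
    _ = ∑ v ∈ G.neighborFinset w, ∑ u ∈ univ.erase w,
          if v ∈ G.neighborFinset u then 1 else 0 := sum_comm
    _ ≤ ∑ _v ∈ G.neighborFinset w, (G.maxDegree - 1) := by
        apply sum_le_sum
        intro v hv
        have h2 : ∑ u ∈ univ.erase w, (if v ∈ G.neighborFinset u then 1 else 0) =
            ((univ.erase w).filter (fun u => v ∈ G.neighborFinset u)).card := by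
          rw [card_filter]
        rw [h2]
        have heq : (univ.erase w).filter (fun u => v ∈ G.neighborFinset u) =
            (G.neighborFinset v).erase w := by
          ext u
          simp only [mem_filter, mem_erase, mem_univ, true_and, mem_neighborFinset]
          rw [adj_comm]
          tauto
        rw [heq, card_erase_of_mem]
        · have := G.degree_le_maxDegree v
          have hd : (G.neighborFinset v).card = G.degree v := rfl
          omega
        · rw [mem_neighborFinset, adj_comm, ← mem_neighborFinset]
          exact hv
    _ = G.degree w * (G.maxDegree - 1) := by rw [sum_const, smul_eq_mul]; rfl
    _ ≤ G.maxDegree * (G.maxDegree - 1) :=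
        Nat.mul_le_mul_right _ (G.degree_le_maxDegree w)

lemma bad_card_le (hInv : Inv G c P) :
    (bad G c P w).card ≤ 2 * G.maxDegree * (G.maxDegree - 1) := by
  classical
  calc (bad G c P w).card ≤ ∑ u ∈ univ, (badU G c P w u).card := card_biUnion_le
    _ = ∑ u ∈ univ.erase w, (badU G c P w u).card + (badU G c P w w).card :=
        (Finset.sum_erase_add _ _ (mem_univ w)).symm
    _ = ∑ u ∈ univ.erase w, (badU G c P w u).card := by
        rw [badU_w_empty]; simp
    _ ≤ ∑ u ∈ univ.erase w, 2 * (G.neighborFinset u ∩ G.neighborFinset w).card :=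
        sum_le_sum fun u _ => badU_card_le G c P w hInv u
    _ = 2 * ∑ u ∈ univ.erase w, (G.neighborFinset u ∩ G.neighborFinset w).card := by
        rw [mul_sum]
    _ ≤ 2 * (G.maxDegree * (G.maxDegree - 1)) :=
        Nat.mul_le_mul_left _ (sum_inter_card_le G w)
    _ = 2 * G.maxDegree * (G.maxDegree - 1) := by ring

end Bad

lemma fixs_update_insert (c : V → ℕ) {P : Finset V} {w : V} (hw : w ∉ P) (z : ℕ) (v : V) :
    fixs G (Function.update c w z) (insert w P) v =
      fixs G c P v + (if w ∈ G.neighborFinset v then z else 0) := by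
  classical
  have hP : ∀ x ∈ G.neighborFinset v ∩ P, Function.update c w z x = c x := by
    intro x hx
    have : x ≠ w := by rintro rfl; exact hw (mem_inter.1 hx).2
    simp [Function.update_of_ne this]
  by_cases hwv : w ∈ G.neighborFinset v
  · have hset : G.neighborFinset v ∩ insert w P = insert w (G.neighborFinset v ∩ P) := by
      ext a; simp only [mem_inter, mem_insert]; constructor
      · rintro ⟨a1, rfl | a2⟩; · exact Or.inl rfl
        · exact Or.inr ⟨a1, a2⟩
      · rintro (rfl | ⟨a1, a2⟩); · exact ⟨hwv, Or.inl rfl⟩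
        · exact ⟨a1, Or.inr a2⟩
    have hwnot : w ∉ G.neighborFinset v ∩ P := fun h => hw (mem_inter.1 h).2
    rw [fixs, hset, sum_insert hwnot, Function.update_self, if_pos hwv, fixs,
      sum_congr rfl hP]
    ring
  · have hset : G.neighborFinset v ∩ insert w P = G.neighborFinset v ∩ P := by
      ext a; simp only [mem_inter, mem_insert]
      constructor
      · rintro ⟨a1, rfl | a2⟩; · exact absurd a1 hwv
        · exact ⟨a1, a2⟩
      · rintro ⟨a1, a2⟩; exact ⟨a1, Or.inr a2⟩
    rw [fixs, hset, if_neg hwv, fixs, sum_congr rfl hP]; ring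

lemma not_mem_nd_of_iff {x y w : V} (h : (w ∈ G.neighborFinset x) ↔ (w ∈ G.neighborFinset y)) :
    w ∉ nd G x y := by
  simp only [nd, mem_union, mem_sdiff]; tauto

lemma nd_subset_of_insert {x y w : V} {P : Finset V}
    (h : (w ∈ G.neighborFinset x) ↔ (w ∈ G.neighborFinset y))
    (hs : nd G x y ⊆ insert w P) : nd G x y ⊆ P := by
  intro a ha
  rcases mem_insert.1 (hs ha) with rfl | h2
  · exact absurd ha (not_mem_nd_of_iff G h)
  · exact h2

/-- The greedy step. -/
lemma step_lemma {c : V → ℕ} {P : Finset V} {w : V} (hInv : Inv G c P) (hw : w ∉ P) :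
    ∃ z, z ∈ Finset.Icc 1 (2 * G.maxDegree * (G.maxDegree - 1) + 1) ∧
      Inv G (Function.update c w z) (insert w P) := by
  classical
  set k := 2 * G.maxDegree * (G.maxDegree - 1) + 1 with hk
  -- find a non-bad color
  have hzex : ∃ z ∈ Finset.Icc 1 k, z ∉ bad G c P w := by
    by_contra hcon
    push_neg at hcon
    have hsub : Finset.Icc 1 k ⊆ bad G c P w := fun z hz => hcon z hz
    have h1 := card_le_card hsub
    have h2 := bad_card_le G c P w hInv
    rw [Nat.card_Icc] at h1
    omega
  obtain ⟨z, hzIcc, hzbad⟩ := hzex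
  refine ⟨z, hzIcc, ?_⟩
  intro u hdeg S hS hpair
  have hfix : ∀ x : V, fixs G (Function.update c w z) (insert w P) x =
      fixs G c P x + (if w ∈ G.neighborFinset x then z else 0) :=
    fixs_update_insert G c hw z
  set S₁ := S.filter (fun x => x ∈ G.neighborFinset w) with hS₁def
  set S₀ := S.filter (fun x => x ∉ G.neighborFinset w) with hS₀def
  have hmemw : ∀ x : V, x ∈ G.neighborFinset w ↔ w ∈ G.neighborFinset x := by
    intro x
    rw [mem_neighborFinset, mem_neighborFinset, adj_comm]
  by_cases h₁ : S₁ = ∅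
  · -- no neighbor of w in S
    apply hInv u hdeg S hS
    intro v hv v' hv'
    have hvnw : v ∉ G.neighborFinset w := by
      intro hmem
      exact absurd (hS₁def ▸ mem_filter.2 ⟨hv, hmem⟩) (by rw [h₁]; exact notMem_empty _)
    have hv'nw : v' ∉ G.neighborFinset w := by
      intro hmem
      exact absurd (hS₁def ▸ mem_filter.2 ⟨hv', hmem⟩) (by rw [h₁]; exact notMem_empty _)
    obtain ⟨hnd, hfx⟩ := hpair v hv v' hv'
    have hiff : (w ∈ G.neighborFinset v) ↔ (w ∈ G.neighborFinset v') := by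
      rw [← hmemw, ← hmemw]; tauto
    refine ⟨nd_subset_of_insert G hiff hnd, ?_⟩
    rw [hfix, hfix] at hfx
    have e1 : w ∉ G.neighborFinset v := fun h => hvnw ((hmemw v).2 h)
    have e2 : w ∉ G.neighborFinset v' := fun h => hv'nw ((hmemw v').2 h)
    rw [if_neg e1, if_neg e2] at hfx
    omega
  by_cases h₀ : S₀ = ∅
  · -- all of S neighbors of w
    apply hInv u hdeg S hS
    intro v hv v' hv'
    have hvw : v ∈ G.neighborFinset w := by
      by_contra hmem
      exact absurd (hS₀def ▸ mem_filter.2 ⟨hv, hmem⟩) (by rw [h₀]; exact notMem_empty _)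
    have hv'w : v' ∈ G.neighborFinset w := by
      by_contra hmem
      exact absurd (hS₀def ▸ mem_filter.2 ⟨hv', hmem⟩) (by rw [h₀]; exact notMem_empty _)
    obtain ⟨hnd, hfx⟩ := hpair v hv v' hv'
    have e1 : w ∈ G.neighborFinset v := (hmemw v).1 hvw
    have e2 : w ∈ G.neighborFinset v' := (hmemw v').1 hv'w
    have hiff : (w ∈ G.neighborFinset v) ↔ (w ∈ G.neighborFinset v') := by tauto
    refine ⟨nd_subset_of_insert G hiff hnd, ?_⟩
    rw [hfix, hfix, if_pos e1, if_pos e2] at hfx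
    omega
  -- both nonempty
  obtain ⟨v, hv⟩ := nonempty_of_ne_empty h₁
  obtain ⟨v', hv'⟩ := nonempty_of_ne_empty h₀
  have hvS : v ∈ S := (mem_filter.1 hv).1
  have hv'S : v' ∈ S := (mem_filter.1 hv').1
  have hvw : v ∈ G.neighborFinset w := (mem_filter.1 hv).2
  have hv'nw : v' ∉ G.neighborFinset w := (mem_filter.1 hv').2
  have hvA : v ∈ G.neighborFinset u ∩ G.neighborFinset w := mem_inter.2 ⟨hS hvS, hvw⟩
  have hv'B : v' ∈ G.neighborFinset u \ G.neighborFinset w := mem_sdiff.2 ⟨hS hv'S, hv'nw⟩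
  -- S₁ is inside the class of v, S₀ inside the class of v'
  have hS₁cls : S₁ ⊆ cls G c P (G.neighborFinset u ∩ G.neighborFinset w) v := by
    intro x hx
    have hxS : x ∈ S := (mem_filter.1 hx).1
    have hxw : x ∈ G.neighborFinset w := (mem_filter.1 hx).2
    obtain ⟨hnd, hfx⟩ := hpair x hxS v hvS
    have e1 : w ∈ G.neighborFinset x := (hmemw x).1 hxw
    have e2 : w ∈ G.neighborFinset v := (hmemw v).1 hvw
    have hiff : (w ∈ G.neighborFinset x) ↔ (w ∈ G.neighborFinset v) := by tauto
    rw [hfix, hfix, if_pos e1, if_pos e2] at hfx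
    exact mem_filter.2 ⟨mem_inter.2 ⟨hS hxS, hxw⟩,
      nd_subset_of_insert G hiff hnd, by omega⟩
  have hS₀cls : S₀ ⊆ cls G c P (G.neighborFinset u \ G.neighborFinset w) v' := by
    intro x hx
    have hxS : x ∈ S := (mem_filter.1 hx).1
    have hxw : x ∉ G.neighborFinset w := (mem_filter.1 hx).2
    obtain ⟨hnd, hfx⟩ := hpair x hxS v' hv'S
    have e1 : w ∉ G.neighborFinset x := fun h => hxw ((hmemw x).2 h)
    have e2 : w ∉ G.neighborFinset v' := fun h => hv'nw ((hmemw v').2 h)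
    have hiff : (w ∈ G.neighborFinset x) ↔ (w ∈ G.neighborFinset v') := by tauto
    rw [hfix, hfix, if_neg e1, if_neg e2] at hfx
    exact mem_filter.2 ⟨mem_sdiff.2 ⟨hS hxS, hxw⟩,
      nd_subset_of_insert G hiff hnd, by omega⟩
  -- the cross pair
  obtain ⟨hndc, hfxc⟩ := hpair v hvS v' hv'S
  have e1 : w ∈ G.neighborFinset v := (hmemw v).1 hvw
  have e2 : w ∉ G.neighborFinset v' := fun h => hv'nw ((hmemw v').2 h)
  rw [hfix, hfix, if_pos e1, if_neg e2] at hfxc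
  -- hfxc : fixs c P v + z = fixs c P v' + 0
  have hzval : fixs G c P v + z = fixs G c P v' := by omega
  -- size bound via non-badness
  have hsize : 2 * ((cls G c P (G.neighborFinset u ∩ G.neighborFinset w) v).card +
      (cls G c P (G.neighborFinset u \ G.neighborFinset w) v').card) ≤ G.degree u := by
    by_contra hbig
    push_neg at hbig
    have hpmem : (v, v') ∈ badPairs G c P w u :=
      mem_badPairs_intro G c P w hvA hv'B hdeg hndc hbig
    have h9 : fixs G c P (v, v').2 - fixs G c P (v, v').1 ∈ badU G c P w u :=
      mem_badU_intro G c P w hpmem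
    have hzz : fixs G c P (v, v').2 - fixs G c P (v, v').1 = z := by
      simp only []
      omega
    rw [hzz] at h9
    exact hzbad (mem_bad_intro G c P w h9)
  have hcards : S₀.card + S₁.card = S.card := by
    rw [hS₀def, hS₁def]
    rw [add_comm]
    exact card_filter_add_card_filter_not (fun x => x ∈ G.neighborFinset w)
  have c1 := card_le_card hS₁cls
  have c2 := card_le_card hS₀cls
  omega

/-- base case: the invariant for `P = ∅` follows from goodness. -/
lemma base_inv (hgood : ¬ ∃ (u : V) (R : Finset V), R ⊆ G.neighborFinset u ∧
      G.degree u < 2 * R.card ∧ 1 < G.degree u ∧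
      ∀ v ∈ R, ∀ w ∈ R, G.neighborSet v = G.neighborSet w) (c : V → ℕ) :
    Inv G c ∅ := by
  intro u hdeg S hS hpair
  by_contra hcon
  push_neg at hcon
  refine hgood ⟨u, S, hS, hcon, by omega, ?_⟩
  intro v hv x hx
  have hnd := (hpair v hv x hx).1
  rw [Finset.subset_empty] at hnd
  have h1 : G.neighborFinset v = G.neighborFinset x := by
    have e1 : G.neighborFinset v \ G.neighborFinset x = ∅ := by
      rw [← Finset.subset_empty, ← hnd]; exact subset_union_left
    have e2 : G.neighborFinset x \ G.neighborFinset v = ∅ := by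
      rw [← Finset.subset_empty, ← hnd]; exact subset_union_right
    apply Finset.Subset.antisymm
    · rw [← sdiff_eq_empty_iff_subset]; exact e1
    · rw [← sdiff_eq_empty_iff_subset]; exact e2
  have := congrArg (fun (s : Finset V) => (s : Set V)) h1
  simpa [neighborFinset] using this

lemma exists_good_coloring
    (hgood : ¬ ∃ (u : V) (R : Finset V), R ⊆ G.neighborFinset u ∧
      G.degree u < 2 * R.card ∧ 1 < G.degree u ∧
      ∀ v ∈ R, ∀ w ∈ R, G.neighborSet v = G.neighborSet w)
    (P : Finset V) :
    ∃ c : V → ℕ, (∀ v ∈ P, c v ∈ Finset.Icc 1 (2 * G.maxDegree * (G.maxDegree - 1) + 1)) ∧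
      Inv G c P := by
  classical
  induction P using Finset.induction_on with
  | empty => exact ⟨fun _ => 1, by simp, base_inv G hgood _⟩
  | @insert w P hw ih =>
      obtain ⟨c, hc, hInv⟩ := ih
      obtain ⟨z, hz, hInv'⟩ := step_lemma G hInv hw
      refine ⟨Function.update c w z, ?_, hInv'⟩
      intro v hv
      rcases mem_insert.1 hv with rfl | hvP
      · rwa [Function.update_self]
      · have : v ≠ w := by rintro rfl; exact hw hvP
        rw [Function.update_of_ne this]
        exact hc v hvP

end MacAux


theorem stmt3 (G : SimpleGraph V) [DecidableRel G.Adj] (hgood : Good G) :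
    ∃ c : V → ℕ, IsMAC G (2 * G.maxDegree * (G.maxDegree - 1) + 1) c := by
  classical
  have hgood' : ¬ ∃ (u : V) (R : Finset V), R ⊆ G.neighborFinset u ∧
      G.degree u < 2 * R.card ∧ 1 < G.degree u ∧
      ∀ v ∈ R, ∀ w ∈ R, G.neighborSet v = G.neighborSet w := hgood
  obtain ⟨c, hc, hInv⟩ := MacAux.exists_good_coloring G hgood' univ
  refine ⟨c, fun v => hc v (mem_univ v), ?_⟩
  intro u hdeg s
  apply hInv u hdeg _ (filter_subset _ _)
  intro v hv v' hv'
  refine ⟨subset_univ _, ?_⟩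
  have h1 : ∀ x : V, MacAux.fixs G c univ x = sc G c x := by
    intro x; rw [MacAux.fixs, inter_univ]; rfl
  rw [h1, h1, (mem_filter.1 hv).2, (mem_filter.1 hv').2]
end

section
/- If a finite simple graph G satisfies the private neighbor condition, then G is good, i.e., there is no vertex u with a set R ⊆ N_G(u) such that 2|R| > deg_G(u) > 1 and all vertices of R have the same neighborhood. -/
open SimpleGraph Finset

variable {V : Type*} [Fintype V] [DecidableEq V]

theorem stmt9 (G : SimpleGraph V) [DecidableRel G.Adj]
    (h : ∀ u : V, 2 ≤ G.degree u → ∀ v ∈ G.neighborSet u,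
      ∃ w ∈ G.neighborSet v, G.neighborSet w ∩ insert u (G.neighborSet u) = {v}) :
    Good G := by
  rintro ⟨u, R, hRsub, hcard, hdeg, hsame⟩
  have hdeg2 : 2 ≤ G.degree u := hdeg
  obtain ⟨v, hv, v', hv', hne⟩ := Finset.one_lt_card.mp (by omega : 1 < R.card)
  have hvN : v ∈ G.neighborSet u := by
    have := hRsub hv; rwa [SimpleGraph.mem_neighborFinset] at this
  have hv'N : v' ∈ G.neighborSet u := by
    have := hRsub hv'; rwa [SimpleGraph.mem_neighborFinset] at this
  obtain ⟨w, hw, hpriv⟩ := h u hdeg2 v hvN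
  have hw' : w ∈ G.neighborSet v' := by rw [← hsame v hv v' hv']; exact hw
  have hmem : v' ∈ G.neighborSet w ∩ insert u (G.neighborSet u) :=
    ⟨(SimpleGraph.mem_neighborSet _ _ _).mpr
      ((SimpleGraph.mem_neighborSet _ _ _).mp hw').symm,
     Set.mem_insert_of_mem _ hv'N⟩
  rw [hpriv] at hmem
  exact hne hmem.symm
end

section
/- Let G be a finite simple graph of maximum degree Δ satisfying the private neighbor condition, and let δ = min{deg_G(u) : u ∈ V(G), deg_G(u) ≥ 2} (assumed well-defined, i.e., some vertex has degree ≥ 2). Then G is good and χ_mac(G) ≤ 4e³ · Δ^(4/⌊δ/2⌋). -/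
open SimpleGraph Finset

variable {V : Type*} [Fintype V] [DecidableEq V]

namespace MacAux
set_option linter.unusedSectionVars false

variable {V : Type*} [Fintype V] [DecidableEq V] {k : ℕ}

/-- `X` is determined by the coordinates in `I`. -/
def Det (X : Finset (V → Fin k)) (I : Finset V) : Prop :=
  ∀ f g : V → Fin k, (∀ x ∈ I, f x = g x) → f ∈ X → g ∈ X

lemma det_mono {X : Finset (V → Fin k)} {I J : Finset V} (hIJ : I ⊆ J) (h : Det X I) :
    Det X J := fun f g hfg => h f g (fun x hx => hfg x (hIJ hx))

lemma indep {X Y : Finset (V → Fin k)} {I J : Finset V} (hX : Det X I) (hY : Det Y J)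
    (hIJ : Disjoint I J) :
    (X ∩ Y).card * (univ : Finset (V → Fin k)).card = X.card * Y.card := by
  classical
  have hmem : ∀ {x : V}, x ∈ J → x ∉ I := fun hx => (Finset.disjoint_right.mp hIJ) hx
  let φ : (V → Fin k) × (V → Fin k) → (V → Fin k) × (V → Fin k) :=
    fun p => (fun x => if x ∈ I then p.1 x else p.2 x, fun x => if x ∈ I then p.2 x else p.1 x)
  have hφφ : ∀ p, φ (φ p) = p := by
    intro p
    refine Prod.ext ?_ ?_ <;> funext x <;> simp only [φ] <;> by_cases hx : x ∈ I <;> simp [hx]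
  have hcard : ((X ∩ Y) ×ˢ (univ : Finset (V → Fin k))).card = (X ×ˢ Y).card := by
    refine Finset.card_bij' (fun p _ => φ p) (fun q _ => φ q) ?_ ?_ ?_ ?_
    · rintro ⟨f, g⟩ hp
      rw [Finset.mem_product] at hp ⊢
      obtain ⟨hf, -⟩ := hp
      rw [Finset.mem_inter] at hf
      constructor
      · exact hX f _ (fun x hx => by simp [φ, hx]) hf.1
      · exact hY f _ (fun x hx => by simp [φ, hmem hx]) hf.2
    · rintro ⟨a, b⟩ hq
      rw [Finset.mem_product] at hq ⊢
      refine ⟨Finset.mem_inter.mpr ⟨?_, ?_⟩, Finset.mem_univ _⟩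
      · exact hX a _ (fun x hx => by simp [φ, hx]) hq.1
      · exact hY b _ (fun x hx => by simp [φ, hmem hx]) hq.2
    · exact fun p _ => hφφ p
    · exact fun q _ => hφφ q
  rwa [Finset.card_product, Finset.card_product] at hcard

variable (A : V → Finset (V → Fin k))

/-- Intersection of the complements of the events indexed by `S`. -/
def Inter (S : Finset V) : Finset (V → Fin k) :=
  univ.filter fun f => ∀ j ∈ S, f ∉ A j

lemma mem_Inter {S : Finset V} {f : V → Fin k} : f ∈ Inter A S ↔ ∀ j ∈ S, f ∉ A j := by
  simp [Inter]

lemma Inter_anti {S T : Finset V} (hST : S ⊆ T) : Inter A T ⊆ Inter A S := by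
  intro f hf
  rw [mem_Inter] at hf ⊢
  exact fun j hj => hf j (hST hj)

lemma Inter_insert {S : Finset V} {i : V} : Inter A (insert i S) = Inter A S \ A i := by
  ext f
  simp only [mem_Inter, Finset.mem_sdiff, Finset.mem_insert]
  constructor
  · intro h
    exact ⟨fun j hj => h j (Or.inr hj), h i (Or.inl rfl)⟩
  · rintro ⟨h1, h2⟩ j (rfl | hj)
    · exact h2
    · exact h1 j hj

variable {Supp : V → Finset V}

lemma det_Inter (hdet : ∀ u, Det (A u) (Supp u)) (S : Finset V) :
    Det (Inter A S) (S.biUnion Supp) := by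
  intro f g hfg hf
  rw [mem_Inter] at hf ⊢
  intro j hj hg
  exact hf j hj (hdet j g f (fun x hx => (hfg x (Finset.mem_biUnion.mpr ⟨j, hj, hx⟩)).symm) hg)
section LLLMain

variable {A : V → Finset (V → Fin k)} {Supp : V → Finset V} {U : Finset V} {D : ℕ}

lemma indep_bound
    (hdet : ∀ u, Det (A u) (Supp u))
    (hp : ∀ u ∈ U, 4 * D * (A u).card ≤ (univ : Finset (V → Fin k)).card)
    {S : Finset V} {i : V} (hiU : i ∈ U)
    (hdisj : ∀ j ∈ S, Disjoint (Supp i) (Supp j)) :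
    4 * D * (A i ∩ Inter A S).card ≤ (Inter A S).card := by
  rcases Nat.eq_zero_or_pos (univ : Finset (V → Fin k)).card with hΩ | hΩ
  · have h0 : (A i ∩ Inter A S).card = 0 :=
      le_antisymm (le_trans (Finset.card_le_card (Finset.subset_univ _)) (le_of_eq hΩ))
        (Nat.zero_le _)
    simp [h0]
  · have hind := indep (hdet i) (det_Inter A hdet S)
      (((Finset.disjoint_biUnion_right _ _ _).mpr hdisj))
    refine Nat.le_of_mul_le_mul_right ?_ hΩ
    calc 4 * D * (A i ∩ Inter A S).card * (univ : Finset (V → Fin k)).card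
        = 4 * D * ((A i ∩ Inter A S).card * (univ : Finset (V → Fin k)).card) := by ring
      _ = 4 * D * ((A i).card * (Inter A S).card) := by rw [hind]
      _ = (4 * D * (A i).card) * (Inter A S).card := by ring
      _ ≤ (univ : Finset (V → Fin k)).card * (Inter A S).card :=
          Nat.mul_le_mul_right _ (hp i hiU)
      _ = (Inter A S).card * (univ : Finset (V → Fin k)).card := by ring

lemma lll_step (hD : 1 ≤ D)
    (hdet : ∀ u, Det (A u) (Supp u))
    (hΓ : ∀ u ∈ U, (U.filter fun j => ¬ Disjoint (Supp u) (Supp j)).card ≤ D)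
    (hp : ∀ u ∈ U, 4 * D * (A u).card ≤ (univ : Finset (V → Fin k)).card) :
    ∀ n : ℕ, ∀ S ⊆ U, S.card ≤ n → ∀ i ∈ U, i ∉ S →
      2 * D * (A i ∩ Inter A S).card ≤ (Inter A S).card := by
  intro n
  induction n with
  | zero =>
    intro S hSU hScard i hiU hiS
    have hS : S = ∅ := Finset.card_eq_zero.mp (Nat.le_zero.mp hScard)
    subst hS
    have h4 := indep_bound hdet hp hiU (S := ∅) (by simp)
    refine le_trans ?_ h4
    exact Nat.mul_le_mul_right _ (by omega)
  | succ n ih =>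
    intro S hSU hScard i hiU hiS
    classical
    set S1 : Finset V := S.filter (fun j => ¬ Disjoint (Supp i) (Supp j)) with hS1def
    set S2 : Finset V := S.filter (fun j => Disjoint (Supp i) (Supp j)) with hS2def
    rcases Finset.eq_empty_or_nonempty S1 with hS1 | hS1
    · -- all events in S are independent of A i
      have hdisj : ∀ j ∈ S, Disjoint (Supp i) (Supp j) := by
        intro j hj
        by_contra hcon
        exact Finset.notMem_empty j (hS1 ▸ Finset.mem_filter.mpr ⟨hj, hcon⟩)
      have h4 := indep_bound hdet hp hiU hdisj
      refine le_trans ?_ h4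
      exact Nat.mul_le_mul_right _ (by omega)
    · have hS2U : S2 ⊆ U := fun j hj => hSU (Finset.mem_filter.mp hj).1
      have hsum : S2.card + S1.card = S.card :=
        Finset.card_filter_add_card_filter_not (p := fun j => Disjoint (Supp i) (Supp j))
      have hS2card : S2.card ≤ n := by
        have h1 : 1 ≤ S1.card := Finset.card_pos.mpr hS1
        omega
      -- (i)
      have hIS2 : Inter A S ⊆ Inter A S2 := Inter_anti A (Finset.filter_subset _ _)
      have hi1 : (A i ∩ Inter A S).card ≤ (A i ∩ Inter A S2).card :=
        Finset.card_le_card (Finset.inter_subset_inter Finset.Subset.rfl hIS2)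
      -- (ii)
      have hi2 : 4 * D * (A i ∩ Inter A S2).card ≤ (Inter A S2).card :=
        indep_bound hdet hp hiU (fun j hj => (Finset.mem_filter.mp hj).2)
      -- (iii)
      have hi3 : ∀ j ∈ S1, 2 * D * (A j ∩ Inter A S2).card ≤ (Inter A S2).card := by
        intro j hj
        have hjS : j ∈ S := (Finset.mem_filter.mp hj).1
        have hjS2 : j ∉ S2 := fun hj2 => (Finset.mem_filter.mp hj).2 (Finset.mem_filter.mp hj2).2
        exact ih S2 hS2U hS2card j (hSU hjS) hjS2
      -- (iv)
      have hi4 : (Inter A S2).card ≤ (Inter A S).card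
          + ∑ j ∈ S1, (A j ∩ Inter A S2).card := by
        have hsub : Inter A S2 ⊆ Inter A S ∪ S1.biUnion (fun j => A j ∩ Inter A S2) := by
          intro f hf
          by_cases hall : ∀ j ∈ S1, f ∉ A j
          · refine Finset.mem_union_left _ ?_
            rw [mem_Inter]
            intro j hj
            by_cases hd : Disjoint (Supp i) (Supp j)
            · exact (mem_Inter A).mp hf j (Finset.mem_filter.mpr ⟨hj, hd⟩)
            · exact hall j (Finset.mem_filter.mpr ⟨hj, hd⟩)
          · push_neg at hall
            obtain ⟨j, hj, hfj⟩ := hall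
            exact Finset.mem_union_right _
              (Finset.mem_biUnion.mpr ⟨j, hj, Finset.mem_inter.mpr ⟨hfj, hf⟩⟩)
        calc (Inter A S2).card ≤ (Inter A S ∪ S1.biUnion (fun j => A j ∩ Inter A S2)).card :=
              Finset.card_le_card hsub
          _ ≤ (Inter A S).card + (S1.biUnion (fun j => A j ∩ Inter A S2)).card :=
              Finset.card_union_le _ _
          _ ≤ (Inter A S).card + ∑ j ∈ S1, (A j ∩ Inter A S2).card :=
              Nat.add_le_add_left (Finset.card_biUnion_le) _
      -- (v)
      have hS1D : S1.card ≤ D := by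
        refine le_trans (Finset.card_le_card ?_) (hΓ i hiU)
        intro j hj
        exact Finset.mem_filter.mpr ⟨hSU (Finset.mem_filter.mp hj).1, (Finset.mem_filter.mp hj).2⟩
      have hi5 : 2 * D * (∑ j ∈ S1, (A j ∩ Inter A S2).card) ≤ D * (Inter A S2).card := by
        calc 2 * D * (∑ j ∈ S1, (A j ∩ Inter A S2).card)
            = ∑ j ∈ S1, 2 * D * (A j ∩ Inter A S2).card := Finset.mul_sum _ _ _
          _ ≤ ∑ _j ∈ S1, (Inter A S2).card := Finset.sum_le_sum hi3
          _ = S1.card * (Inter A S2).card := by rw [Finset.sum_const, smul_eq_mul]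
          _ ≤ D * (Inter A S2).card := Nat.mul_le_mul_right _ hS1D
      -- combine
      set a := (Inter A S).card
      set b := (Inter A S2).card
      have hDb : D * b ≤ 2 * D * a := by
        have h1 : 2 * D * b ≤ 2 * D * a + 2 * D * (∑ j ∈ S1, (A j ∩ Inter A S2).card) := by
          calc 2 * D * b ≤ 2 * D * (a + ∑ j ∈ S1, (A j ∩ Inter A S2).card) :=
                Nat.mul_le_mul_left _ hi4
            _ = 2 * D * a + 2 * D * (∑ j ∈ S1, (A j ∩ Inter A S2).card) := by ring
        have h2 : 2 * D * b ≤ 2 * D * a + D * b := le_trans h1 (Nat.add_le_add_left hi5 _)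
        have h3 : D * b + D * b = 2 * D * b := by ring
        omega
      refine Nat.le_of_mul_le_mul_left ?_ (show 0 < 2 * D by omega)
      calc 2 * D * (2 * D * (A i ∩ Inter A S).card)
          = D * (4 * D * (A i ∩ Inter A S).card) := by ring
        _ ≤ D * (4 * D * (A i ∩ Inter A S2).card) := by
            refine Nat.mul_le_mul_left _ ?_
            exact Nat.mul_le_mul_left _ hi1
        _ ≤ D * b := Nat.mul_le_mul_left _ hi2
        _ ≤ 2 * D * a := hDb
        _ = 2 * D * a := rfl

lemma lll_pos (hD : 1 ≤ D)
    (hdet : ∀ u, Det (A u) (Supp u))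
    (hΓ : ∀ u ∈ U, (U.filter fun j => ¬ Disjoint (Supp u) (Supp j)).card ≤ D)
    (hp : ∀ u ∈ U, 4 * D * (A u).card ≤ (univ : Finset (V → Fin k)).card)
    (hΩ : 0 < (univ : Finset (V → Fin k)).card) :
    ∀ S ⊆ U, 0 < (Inter A S).card := by
  intro S
  induction S using Finset.induction_on with
  | empty =>
    intro _
    simpa [Inter] using hΩ
  | @insert i S' hiS ih =>
    intro hSU
    have hiU : i ∈ U := hSU (Finset.mem_insert_self i S')
    have hS'U : S' ⊆ U := fun j hj => hSU (Finset.mem_insert_of_mem hj)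
    have hpos := ih hS'U
    have hstep := lll_step hD hdet hΓ hp S'.card S' hS'U le_rfl i hiU hiS
    have hlt : (Inter A S' ∩ A i).card < (Inter A S').card := by
      rcases Nat.lt_or_ge (Inter A S' ∩ A i).card (Inter A S').card with h | h
      · exact h
      · exfalso
        have hle : (Inter A S').card ≤ (A i ∩ Inter A S').card := by
          rwa [Finset.inter_comm] at h
        have : 2 * D * (Inter A S').card ≤ (Inter A S').card :=
          le_trans (Nat.mul_le_mul_left _ hle) hstep
        nlinarith [hpos]
    have hcard : (Inter A (insert i S')).card + (Inter A S' ∩ A i).card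
        = (Inter A S').card := by
      rw [Inter_insert]
      exact Finset.card_sdiff_add_card_inter _ _
    omega

lemma lll_final (hD : 1 ≤ D)
    (hdet : ∀ u, Det (A u) (Supp u))
    (hΓ : ∀ u ∈ U, (U.filter fun j => ¬ Disjoint (Supp u) (Supp j)).card ≤ D)
    (hp : ∀ u ∈ U, 4 * D * (A u).card ≤ (univ : Finset (V → Fin k)).card)
    (hΩ : 0 < (univ : Finset (V → Fin k)).card) :
    ∃ f : V → Fin k, ∀ u ∈ U, f ∉ A u := by
  have hpos := lll_pos hD hdet hΓ hp hΩ U Finset.Subset.rfl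
  obtain ⟨f, hf⟩ := Finset.card_pos.mp hpos
  exact ⟨f, (mem_Inter A).mp hf⟩

end LLLMain


section Helpers

open SimpleGraph

variable (G : SimpleGraph V) [DecidableRel G.Adj]

lemma adjF {v w : V} (h : w ∈ G.neighborFinset v) : G.Adj v w := by
  rwa [SimpleGraph.mem_neighborFinset] at h

lemma adjF' {v w : V} (h : G.Adj v w) : w ∈ G.neighborFinset v := by
  rwa [SimpleGraph.mem_neighborFinset]

lemma setF {v w : V} (h : w ∈ G.neighborFinset v) : w ∈ G.neighborSet v :=
  (G.mem_neighborSet v w).mpr (adjF G h)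

lemma setF' {v w : V} (h : w ∈ G.neighborSet v) : w ∈ G.neighborFinset v :=
  adjF' G ((G.mem_neighborSet v w).mp h)

end Helpers
section App

open SimpleGraph

variable (G : SimpleGraph V) [DecidableRel G.Adj]

/-- colors from a `Fin k`-valued function -/
def cK (f : V → Fin k) : V → ℕ := fun v => (f v : ℕ) + 1

lemma cardE
    (hpnc : ∀ u : V, 2 ≤ G.degree u → ∀ v ∈ G.neighborSet u,
      ∃ w ∈ G.neighborSet v, G.neighborSet w ∩ insert u (G.neighborSet u) = {v})
    {u : V} (hu : 2 ≤ G.degree u) {T : Finset V} (hT : T ⊆ G.neighborFinset u)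
    {v0 : V} (hv0 : v0 ∈ T) :
    (univ.filter (fun f : V → Fin k =>
        ∀ v ∈ T, sc G (cK f) v = sc G (cK f) v0)).card
      ≤ k ^ (Fintype.card V - (T.card - 1)) := by
  classical
  haveI : Nonempty V := ⟨v0⟩
  have hch : ∀ v ∈ T.erase v0, ∃ w, w ∈ G.neighborSet v ∧
      G.neighborSet w ∩ insert u (G.neighborSet u) = {v} := by
    intro v hv
    have hvN : v ∈ G.neighborSet u := setF G (hT (Finset.erase_subset _ _ hv))
    obtain ⟨w, hw1, hw2⟩ := hpnc u hu v hvN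
    exact ⟨w, hw1, hw2⟩
  choose! wf hw1 hw2 using hch
  have key : ∀ v' ∈ T, ∀ v ∈ T.erase v0, v' ∈ G.neighborSet (wf v) → v' = v := by
    intro v' hv' v hv hadj
    have hv'N : v' ∈ insert u (G.neighborSet u) :=
      Set.mem_insert_of_mem _ (setF G (hT hv'))
    have : v' ∈ G.neighborSet (wf v) ∩ insert u (G.neighborSet u) := ⟨hadj, hv'N⟩
    rw [hw2 v hv] at this
    exact this
  have key2 : ∀ v ∈ T.erase v0, wf v ∈ G.neighborFinset v := by
    intro v hv
    exact setF' G (hw1 v hv)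
  have keyself : ∀ v ∈ T.erase v0, v ∈ G.neighborSet (wf v) := by
    intro v hv
    exact (G.mem_neighborSet _ _).mpr ((adjF G (key2 v hv)).symm)
  set W : Finset V := (T.erase v0).image wf with hW
  have hinj : Set.InjOn wf (T.erase v0) := by
    intro v hv v' hv' heq
    have h1 : v ∈ G.neighborSet (wf v') := heq ▸ keyself v hv
    exact key v (Finset.erase_subset _ _ hv) v' hv' h1
  have hcardW : W.card = T.card - 1 := by
    rw [hW, Finset.card_image_of_injOn hinj, Finset.card_erase_of_mem hv0]
  have hWnb : ∀ v' ∈ T, ∀ x ∈ W, x ∈ G.neighborFinset v' → v' ∈ T.erase v0 ∧ x = wf v' := by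
    intro v' hv' x hx hadj
    obtain ⟨v, hv, rfl⟩ := Finset.mem_image.mp hx
    have : v' = v := by
      refine key v' hv' v hv ?_
      exact (G.mem_neighborSet _ _).mpr ((adjF G hadj).symm)
    subst this
    exact ⟨hv, rfl⟩
  -- restriction map
  set E := (univ.filter (fun f : V → Fin k =>
      ∀ v ∈ T, sc G (cK f) v = sc G (cK f) v0)) with hE
  have hEinj : Set.InjOn (fun f : V → Fin k => (fun x : {x // x ∈ Wᶜ} => f x)) E := by
    intro f hf g hg hfg
    have hoff : ∀ x, x ∉ W → f x = g x := by
      intro x hx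
      exact congrFun hfg ⟨x, Finset.mem_compl.mpr hx⟩
    have hf' : ∀ v ∈ T, sc G (cK f) v = sc G (cK f) v0 :=
      (Finset.mem_filter.mp hf).2
    have hg' : ∀ v ∈ T, sc G (cK g) v = sc G (cK g) v0 :=
      (Finset.mem_filter.mp hg).2
    have hsum0 : sc G (cK f) v0 = sc G (cK g) v0 := by
      unfold sc
      refine Finset.sum_congr rfl ?_
      intro y hy
      have hyW : y ∉ W := by
        intro hyW
        have := hWnb v0 hv0 y hyW hy
        exact Finset.notMem_erase v0 T this.1
      unfold cK
      rw [hoff y hyW]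
    have honW : ∀ v ∈ T.erase v0, f (wf v) = g (wf v) := by
      intro v hv
      have htail : ∑ y ∈ (G.neighborFinset v).erase (wf v), cK f y
          = ∑ y ∈ (G.neighborFinset v).erase (wf v), cK g y := by
        refine Finset.sum_congr rfl ?_
        intro y hy
        have hyNv : y ∈ G.neighborFinset v := Finset.erase_subset _ _ hy
        have hyW : y ∉ W := by
          intro hyW
          have := hWnb v (Finset.erase_subset _ _ hv) y hyW hyNv
          exact (Finset.ne_of_mem_erase hy) this.2
        unfold cK
        rw [hoff y hyW]
      have hsplitf : cK f (wf v) + ∑ y ∈ (G.neighborFinset v).erase (wf v), cK f y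
          = sc G (cK f) v := Finset.add_sum_erase _ _ (key2 v hv)
      have hsplitg : cK g (wf v) + ∑ y ∈ (G.neighborFinset v).erase (wf v), cK g y
          = sc G (cK g) v := Finset.add_sum_erase _ _ (key2 v hv)
      have hvT : v ∈ T := Finset.erase_subset _ _ hv
      have heqsum : sc G (cK f) v = sc G (cK g) v := by
        rw [hf' v hvT, hg' v hvT, hsum0]
      have : cK f (wf v) = cK g (wf v) := by omega
      unfold cK at this
      exact Fin.ext (by omega)
    funext x
    by_cases hx : x ∈ W
    · obtain ⟨v, hv, rfl⟩ := Finset.mem_image.mp hx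
      exact honW v hv
    · exact hoff x hx
  calc E.card ≤ (univ : Finset ({x // x ∈ Wᶜ} → Fin k)).card :=
        Finset.card_le_card_of_injOn _ (fun f _ => Finset.mem_univ _) hEinj
    _ = k ^ (Fintype.card V - (T.card - 1)) := by
        rw [Finset.card_univ, Fintype.card_fun, Fintype.card_coe, Fintype.card_fin,
          Finset.card_compl, hcardW]

end App
section App2

open SimpleGraph

variable (G : SimpleGraph V) [DecidableRel G.Adj]

/-- The bad event for vertex `u`. -/
def Bad (k : ℕ) (u : V) : Finset (V → Fin k) :=
  univ.filter (fun f => ∃ v ∈ G.neighborFinset u,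
    G.degree u < 2 * ((G.neighborFinset u).filter
      (fun v' => sc G (cK f) v' = sc G (cK f) v)).card)

/-- The support of the bad event for `u`. -/
def GSupp (u : V) : Finset V := (G.neighborFinset u).biUnion (fun v => G.neighborFinset v)

lemma sc_congr {k : ℕ} {f g : V → Fin k} {v : V}
    (h : ∀ x ∈ G.neighborFinset v, f x = g x) :
    sc G (cK f) v = sc G (cK g) v := by
  unfold sc cK
  exact Finset.sum_congr rfl (fun x hx => by rw [h x hx])

lemma det_Bad (k : ℕ) (u : V) : Det (Bad G k u) (GSupp G u) := by
  intro f g hfg hf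
  rw [Bad, Finset.mem_filter] at hf ⊢
  refine ⟨Finset.mem_univ _, ?_⟩
  obtain ⟨v, hv, hcount⟩ := hf.2
  refine ⟨v, hv, ?_⟩
  have hsc : ∀ v' ∈ G.neighborFinset u, sc G (cK f) v' = sc G (cK g) v' := by
    intro v' hv'
    refine sc_congr G (fun x hx => hfg x ?_)
    exact Finset.mem_biUnion.mpr ⟨v', hv', hx⟩
  have heq : ((G.neighborFinset u).filter
        (fun v' => sc G (cK f) v' = sc G (cK f) v)).card
      = ((G.neighborFinset u).filter
        (fun v' => sc G (cK g) v' = sc G (cK g) v)).card := by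
    refine congrArg Finset.card (Finset.filter_congr ?_)
    intro v' hv'
    rw [hsc v' hv', hsc v hv]
  rw [heq] at hcount
  exact hcount

lemma card_Supp_le (u : V) : (GSupp G u).card ≤ G.maxDegree ^ 2 := by
  refine le_trans Finset.card_biUnion_le ?_
  calc ∑ v ∈ G.neighborFinset u, (G.neighborFinset v).card
      ≤ ∑ _v ∈ G.neighborFinset u, G.maxDegree := by
        refine Finset.sum_le_sum (fun v _ => ?_)
        rw [G.card_neighborFinset_eq_degree]
        exact G.degree_le_maxDegree v
    _ = (G.neighborFinset u).card * G.maxDegree := by rw [Finset.sum_const, smul_eq_mul]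
    _ ≤ G.maxDegree * G.maxDegree := by
        refine Nat.mul_le_mul_right _ ?_
        rw [G.card_neighborFinset_eq_degree]
        exact G.degree_le_maxDegree u
    _ = G.maxDegree ^ 2 := by ring

lemma gamma_le (u : V) (U : Finset V) :
    (U.filter fun j => ¬ Disjoint (GSupp G u) (GSupp G j)).card ≤ G.maxDegree ^ 4 := by
  classical
  have hsub : (U.filter fun j => ¬ Disjoint (GSupp G u) (GSupp G j))
      ⊆ (GSupp G u).biUnion (GSupp G) := by
    intro j hj
    obtain ⟨x, hxu, hxj⟩ := Finset.not_disjoint_iff.mp (Finset.mem_filter.mp hj).2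
    obtain ⟨v', hv', hx⟩ := Finset.mem_biUnion.mp hxj
    refine Finset.mem_biUnion.mpr ⟨x, hxu, Finset.mem_biUnion.mpr ⟨v', ?_, ?_⟩⟩
    · exact adjF' G ((adjF G hx).symm)
    · exact adjF' G ((adjF G hv').symm)
  refine le_trans (Finset.card_le_card hsub) ?_
  refine le_trans Finset.card_biUnion_le ?_
  calc ∑ x ∈ GSupp G u, (GSupp G x).card
      ≤ ∑ _x ∈ GSupp G u, G.maxDegree ^ 2 :=
        Finset.sum_le_sum (fun x _ => card_Supp_le G x)
    _ = (GSupp G u).card * G.maxDegree ^ 2 := by rw [Finset.sum_const, smul_eq_mul]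
    _ ≤ G.maxDegree ^ 2 * G.maxDegree ^ 2 := Nat.mul_le_mul_right _ (card_Supp_le G u)
    _ = G.maxDegree ^ 4 := by ring

lemma card_Bad_le
    (hpnc : ∀ u : V, 2 ≤ G.degree u → ∀ v ∈ G.neighborSet u,
      ∃ w ∈ G.neighborSet v, G.neighborSet w ∩ insert u (G.neighborSet u) = {v})
    {k : ℕ} {u : V} (hu : 2 ≤ G.degree u) :
    (Bad G k u).card ≤ (G.degree u).choose (G.degree u / 2 + 1)
      * k ^ (Fintype.card V - G.degree u / 2) := by
  classical
  set d := G.degree u with hd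
  set t := d / 2 + 1 with ht
  set E : Finset V → Finset (V → Fin k) := fun T =>
    univ.filter (fun f => ∀ v ∈ T, ∀ v' ∈ T, sc G (cK f) v = sc G (cK f) v') with hE
  have hsub : Bad G k u ⊆ ((G.neighborFinset u).powersetCard t).biUnion E := by
    intro f hf
    rw [Bad, Finset.mem_filter] at hf
    obtain ⟨v, hv, hcount⟩ := hf.2
    set F := (G.neighborFinset u).filter
      (fun v' => sc G (cK f) v' = sc G (cK f) v) with hF
    have htF : t ≤ F.card := by omega
    obtain ⟨T, hTF, hTcard⟩ := Finset.exists_subset_card_eq htF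
    refine Finset.mem_biUnion.mpr ⟨T, ?_, ?_⟩
    · exact Finset.mem_powersetCard.mpr
        ⟨hTF.trans (Finset.filter_subset _ _), hTcard⟩
    · refine Finset.mem_filter.mpr ⟨Finset.mem_univ _, ?_⟩
      intro a ha b hb
      have ha' := (Finset.mem_filter.mp (hTF ha)).2
      have hb' := (Finset.mem_filter.mp (hTF hb)).2
      rw [ha', hb']
  refine le_trans (Finset.card_le_card hsub) ?_
  refine le_trans Finset.card_biUnion_le ?_
  have hbound : ∀ T ∈ (G.neighborFinset u).powersetCard t,
      (E T).card ≤ k ^ (Fintype.card V - d / 2) := by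
    intro T hT
    obtain ⟨hTsub, hTcard⟩ := Finset.mem_powersetCard.mp hT
    have hTne : T.Nonempty := Finset.card_pos.mp (by omega)
    obtain ⟨v0, hv0⟩ := hTne
    have hsub2 : E T ⊆ univ.filter (fun f : V → Fin k =>
        ∀ v ∈ T, sc G (cK f) v = sc G (cK f) v0) := by
      intro f hf
      rw [hE, Finset.mem_filter] at hf
      exact Finset.mem_filter.mpr ⟨Finset.mem_univ _, fun v hvT => hf.2 v hvT v0 hv0⟩
    refine le_trans (Finset.card_le_card hsub2) ?_
    have hc := cardE (k := k) G hpnc hu hTsub hv0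
    rw [hTcard] at hc
    have : t - 1 = d / 2 := by omega
    rwa [this] at hc
  calc ∑ T ∈ (G.neighborFinset u).powersetCard t, (E T).card
      ≤ ∑ _T ∈ (G.neighborFinset u).powersetCard t, k ^ (Fintype.card V - d / 2) :=
        Finset.sum_le_sum hbound
    _ = ((G.neighborFinset u).powersetCard t).card * k ^ (Fintype.card V - d / 2) := by
        rw [Finset.sum_const, smul_eq_mul]
    _ = d.choose t * k ^ (Fintype.card V - d / 2) := by
        rw [Finset.card_powersetCard, G.card_neighborFinset_eq_degree]

end App2
section App3

open SimpleGraph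

lemma choose_le_two_pow' (n k : ℕ) : n.choose k ≤ 2 ^ n := by
  rcases le_or_gt k n with h | h
  · calc n.choose k ≤ ∑ i ∈ Finset.range (n + 1), n.choose i :=
        Finset.single_le_sum (fun _ _ => Nat.zero_le _) (Finset.mem_range.mpr (by omega))
      _ = 2 ^ n := Nat.sum_range_choose n
  · rw [Nat.choose_eq_zero_of_lt h]
    exact Nat.zero_le _

variable (G : SimpleGraph V) [DecidableRel G.Adj]

lemma hp_bound
    (hpnc : ∀ u : V, 2 ≤ G.degree u → ∀ v ∈ G.neighborSet u,
      ∃ w ∈ G.neighborSet v, G.neighborSet w ∩ insert u (G.neighborSet u) = {v})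
    {k m : ℕ} (hm1 : 1 ≤ m)
    (hk64 : (64 : ℝ) * (G.maxDegree : ℝ) ^ ((4 : ℝ) / (m : ℝ)) ≤ (k : ℝ))
    (hΔ2 : 2 ≤ G.maxDegree)
    {u : V} (hu : 2 ≤ G.degree u) (hmj : m ≤ G.degree u / 2) :
    4 * G.maxDegree ^ 4 * (Bad G k u).card ≤ (univ : Finset (V → Fin k)).card := by
  classical
  set Δ := G.maxDegree with hΔdef
  set d := G.degree u with hddef
  set j := d / 2 with hjdef
  set n := Fintype.card V with hndef
  have hj1 : 1 ≤ j := by omega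
  have hdn : d ≤ n := by
    have h1 : (G.neighborFinset u).card ≤ n := Finset.card_le_univ _
    rw [G.card_neighborFinset_eq_degree] at h1
    exact h1
  have hjn : j ≤ n := by omega
  have hΔ1R : (1 : ℝ) ≤ (Δ : ℝ) := by exact_mod_cast (by omega : 1 ≤ Δ)
  have hΔ0R : (0 : ℝ) ≤ (Δ : ℝ) := by linarith
  have hm0R : (0 : ℝ) < (m : ℝ) := by exact_mod_cast hm1
  set x : ℝ := (Δ : ℝ) ^ ((4 : ℝ) / (m : ℝ)) with hxdef
  have hx0 : (0 : ℝ) ≤ x := Real.rpow_nonneg hΔ0R _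
  have hxj : ((Δ : ℝ)) ^ (4 : ℕ) ≤ x ^ j := by
    rw [hxdef, ← Real.rpow_natCast ((Δ : ℝ) ^ ((4 : ℝ) / (m : ℝ))) j,
      ← Real.rpow_mul hΔ0R]
    have h4 : (4 : ℝ) ≤ (4 : ℝ) / (m : ℝ) * (j : ℝ) := by
      rw [div_mul_eq_mul_div, le_div_iff₀ hm0R]
      have hmjR : (m : ℝ) ≤ (j : ℝ) := by exact_mod_cast hmj
      nlinarith
    calc ((Δ : ℝ)) ^ (4 : ℕ) = (Δ : ℝ) ^ ((4 : ℝ)) := by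
          rw [← Real.rpow_natCast (Δ : ℝ) 4]; norm_num
      _ ≤ (Δ : ℝ) ^ ((4 : ℝ) / (m : ℝ) * (j : ℝ)) :=
          Real.rpow_le_rpow_of_exponent_le hΔ1R h4
  have hkey : 4 * Δ ^ 4 * d.choose (j + 1) ≤ k ^ j := by
    have hcR : ((d.choose (j + 1) : ℕ) : ℝ) ≤ 2 * 4 ^ j := by
      have h1 : d.choose (j + 1) ≤ 2 ^ d := choose_le_two_pow' d (j + 1)
      have h2 : (2 : ℕ) ^ d ≤ 2 ^ (2 * j + 1) := Nat.pow_le_pow_right (by norm_num) (by omega)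
      have h3 : (2 : ℕ) ^ (2 * j + 1) = 2 * 4 ^ j := by
        rw [pow_succ']
        congr 1
        rw [pow_mul]
        norm_num
      have : d.choose (j + 1) ≤ 2 * 4 ^ j := le_trans h1 (le_trans h2 (le_of_eq h3))
      exact_mod_cast this
    have h16 : (8 : ℝ) * 4 ^ j ≤ 64 ^ j := by
      have h64 : (64 : ℝ) ^ j = 4 ^ j * 16 ^ j := by
        rw [← mul_pow]; norm_num
      have h16j : (16 : ℝ) ≤ 16 ^ j := by
        calc (16 : ℝ) = 16 ^ 1 := (pow_one _).symm
          _ ≤ 16 ^ j := pow_le_pow_right₀ (by norm_num) hj1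
      have h4j : (0 : ℝ) < 4 ^ j := pow_pos (by norm_num) j
      nlinarith
    have hRkey : (4 * Δ ^ 4 * d.choose (j + 1) : ℝ) ≤ (k : ℝ) ^ j := by
      have hΔ4 : (0:ℝ) ≤ (Δ:ℝ) ^ (4:ℕ) := by positivity
      calc (4 * (Δ:ℝ) ^ 4 * (d.choose (j + 1) : ℕ) : ℝ)
          ≤ 4 * (Δ:ℝ) ^ 4 * (2 * 4 ^ j) := by
            refine mul_le_mul_of_nonneg_left hcR ?_
            positivity
        _ = (8 * 4 ^ j) * (Δ:ℝ) ^ (4:ℕ) := by ring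
        _ ≤ 64 ^ j * (Δ:ℝ) ^ (4:ℕ) := mul_le_mul_of_nonneg_right h16 hΔ4
        _ ≤ 64 ^ j * x ^ j := mul_le_mul_of_nonneg_left hxj (by positivity)
        _ = (64 * x) ^ j := (mul_pow _ _ _).symm
        _ ≤ (k : ℝ) ^ j := by
            refine pow_le_pow_left₀ ?_ hk64 j
            positivity
    exact_mod_cast hRkey
  have hcard := card_Bad_le G hpnc (k := k) hu
  have hunivcard : (univ : Finset (V → Fin k)).card = k ^ n := by
    rw [Finset.card_univ, Fintype.card_fun, Fintype.card_fin]
  calc 4 * Δ ^ 4 * (Bad G k u).card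
      ≤ 4 * Δ ^ 4 * (d.choose (j + 1) * k ^ (n - j)) := Nat.mul_le_mul_left _ hcard
    _ = (4 * Δ ^ 4 * d.choose (j + 1)) * k ^ (n - j) := by ring
    _ ≤ k ^ j * k ^ (n - j) := Nat.mul_le_mul_right _ hkey
    _ = k ^ n := by rw [← pow_add]; congr 1; omega
    _ = (univ : Finset (V → Fin k)).card := hunivcard.symm

end App3

end MacAux

theorem stmt14 (G : SimpleGraph V) [DecidableRel G.Adj]
    (hpnc : ∀ u : V, 2 ≤ G.degree u → ∀ v ∈ G.neighborSet u,
      ∃ w ∈ G.neighborSet v, G.neighborSet w ∩ insert u (G.neighborSet u) = {v})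
    (hδ : ∃ u : V, 2 ≤ G.degree u) :
    Good G ∧
      ∃ k : ℕ, (∃ c : V → ℕ, IsMAC G k c) ∧
        (k : ℝ) ≤ 4 * Real.exp 3 *
          (G.maxDegree : ℝ) ^
            ((4 : ℝ) / ((sInf {d : ℕ | ∃ u : V, G.degree u = d ∧ 2 ≤ d} / 2 : ℕ) : ℝ)) := by
  classical
  constructor
  · -- Good
    rintro ⟨u, R, hRN, hcard, hdeg, hsame⟩
    have hu2 : 2 ≤ G.degree u := hdeg
    have hR2 : 1 < R.card := by omega
    obtain ⟨v, hv, v', hv', hne⟩ := Finset.one_lt_card.mp hR2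
    obtain ⟨w, hw1, hw2⟩ := hpnc u hu2 v (MacAux.setF G (hRN hv))
    have h1 : v' ∈ G.neighborSet w := by
      have hw1' : w ∈ G.neighborSet v' := (hsame v hv v' hv') ▸ hw1
      exact (G.mem_neighborSet _ _).mpr ((G.mem_neighborSet _ _).mp hw1').symm
    have h2 : v' ∈ insert u (G.neighborSet u) :=
      Set.mem_insert_of_mem _ (MacAux.setF G (hRN hv'))
    have h3 : v' ∈ G.neighborSet w ∩ insert u (G.neighborSet u) := ⟨h1, h2⟩
    rw [hw2] at h3
    exact hne (Set.mem_singleton_iff.mp h3).symm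
  · -- coloring
    obtain ⟨u0, hu0⟩ := hδ
    set Δ := G.maxDegree with hΔdef
    set δ' := sInf {d : ℕ | ∃ u : V, G.degree u = d ∧ 2 ≤ d} with hδ'def
    set m := δ' / 2 with hmdef
    have hδmem : δ' ∈ {d : ℕ | ∃ u : V, G.degree u = d ∧ 2 ≤ d} :=
      Nat.sInf_mem ⟨G.degree u0, u0, rfl, hu0⟩
    have hδ2 : 2 ≤ δ' := hδmem.choose_spec.2
    have hm1 : 1 ≤ m := by omega
    have hΔ2 : 2 ≤ Δ := le_trans hu0 (G.degree_le_maxDegree u0)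
    have hΔ0R : (0 : ℝ) ≤ (Δ : ℝ) := by positivity
    have hΔ1R : (1 : ℝ) ≤ (Δ : ℝ) := by exact_mod_cast (by omega : 1 ≤ Δ)
    set x : ℝ := (Δ : ℝ) ^ ((4 : ℝ) / (m : ℝ)) with hxdef
    have hx1 : (1 : ℝ) ≤ x := Real.one_le_rpow hΔ1R (by positivity)
    set k := ⌊(80 : ℝ) * x⌋₊ with hkdef
    have hk_le : (k : ℝ) ≤ 80 * x := Nat.floor_le (by positivity)
    have hk_ge : (64 : ℝ) * x ≤ (k : ℝ) := by
      have h1 : (80 : ℝ) * x - 1 < (k : ℝ) := Nat.sub_one_lt_floor _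
      nlinarith
    have hk1 : 1 ≤ k := by
      have : (1 : ℝ) ≤ (k : ℝ) := by nlinarith
      exact_mod_cast this
    -- LLL setup
    set U : Finset V := univ.filter (fun u => 2 ≤ G.degree u) with hUdef
    have hD1 : 1 ≤ Δ ^ 4 := Nat.one_le_iff_ne_zero.mpr (by positivity)
    have hΓ : ∀ u ∈ U, (U.filter fun j => ¬ Disjoint (MacAux.GSupp G u) (MacAux.GSupp G j)).card
        ≤ Δ ^ 4 := fun u _ => MacAux.gamma_le G u U
    have hp : ∀ u ∈ U, 4 * Δ ^ 4 * (MacAux.Bad G k u).card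
        ≤ (univ : Finset (V → Fin k)).card := by
      intro u hu
      have hu2 : 2 ≤ G.degree u := (Finset.mem_filter.mp hu).2
      have hmj : m ≤ G.degree u / 2 := by
        have hle : δ' ≤ G.degree u := Nat.sInf_le ⟨u, rfl, hu2⟩
        omega
      exact MacAux.hp_bound G hpnc hm1 hk_ge hΔ2 hu2 hmj
    have hΩ : 0 < (univ : Finset (V → Fin k)).card := by
      haveI : Nonempty (V → Fin k) := ⟨fun _ => ⟨0, by omega⟩⟩
      exact Finset.card_pos.mpr Finset.univ_nonempty
    obtain ⟨f, hf⟩ := MacAux.lll_final (A := MacAux.Bad G k) (Supp := MacAux.GSupp G)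
      (U := U) (D := Δ ^ 4) hD1 (MacAux.det_Bad G k) hΓ hp hΩ
    refine ⟨k, ⟨MacAux.cK f, ?_, ?_⟩, ?_⟩
    · -- colors in Icc 1 k
      intro v
      rw [Finset.mem_Icc]
      have := (f v).isLt
      unfold MacAux.cK
      omega
    · -- majority condition
      intro u hu2 s
      have hfu : f ∉ MacAux.Bad G k u :=
        hf u (Finset.mem_filter.mpr ⟨Finset.mem_univ _, hu2⟩)
      rw [MacAux.Bad, Finset.mem_filter] at hfu
      push_neg at hfu
      have hfu' := hfu (Finset.mem_univ _)
      by_contra hcon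
      push_neg at hcon
      have hpos : 0 < ((G.neighborFinset u).filter
          (fun v => sc G (MacAux.cK f) v = s)).card := by omega
      obtain ⟨v, hvmem⟩ := Finset.card_pos.mp hpos
      have hvN : v ∈ G.neighborFinset u := (Finset.mem_filter.mp hvmem).1
      have hvs : sc G (MacAux.cK f) v = s := (Finset.mem_filter.mp hvmem).2
      have := hfu' v hvN
      rw [hvs] at this
      omega
    · -- numerical bound
      have hexp : (20 : ℝ) ≤ Real.exp 3 := by
        have h1 : (2.7182818283 : ℝ) < Real.exp 1 := Real.exp_one_gt_d9
        have h2 : Real.exp 1 ^ (3 : ℕ) = Real.exp 3 := by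
          rw [Real.exp_one_pow]; norm_num
        calc (20 : ℝ) ≤ (2.7182818283 : ℝ) ^ (3 : ℕ) := by norm_num
          _ ≤ Real.exp 1 ^ (3 : ℕ) := pow_le_pow_left₀ (by norm_num) h1.le 3
          _ = Real.exp 3 := h2
      calc (k : ℝ) ≤ 80 * x := hk_le
        _ ≤ 4 * Real.exp 3 * x := by nlinarith
end
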